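/- arXiv:1903.10723 — 6 statements merged into one kernel-verified Lean document; each statement's English description precedes it below -/
import Mathlib

section
/- If [H_L(u); H_L(y)] α = [ū; ȳ] for a trajectory (u,y) of an LTI system with state sequence x, then the corresponding state windows also combine linearly: for every k ∈ {0,...,L-1}, the state x̄_k := Σ_{i=0}^{N-L} α_i x_{k+i} together with (ū, ȳ) satisfies x̄_{k+1} = A x̄_k + B ū_k and ȳ_k = C x̄_k + D ū_k. -/
open Matrix

/-- Block Hankel matrix of depth `L` of a signal `x` with values in `ℝ^d`,
built from the data `x 0, ..., x (N-1)`. -/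
def hankel (d L N : ℕ) (x : ℕ → Fin d → ℝ) :
    Matrix (Fin L × Fin d) (Fin (N - L + 1)) ℝ :=
  fun q j => x ((q.1 : ℕ) + (j : ℕ)) q.2

lemma mulVec_weighted {a b c : ℕ} (M : Matrix (Fin a) (Fin b) ℝ)
    (α : Fin c → ℝ) (v : Fin c → Fin b → ℝ) :
    M.mulVec (∑ j : Fin c, α j • v j) = ∑ j : Fin c, α j • M.mulVec (v j) := by
  simp_rw [← Matrix.mulVecLin_apply, map_sum, _root_.map_smul]

/-- If `[H_L(u); H_L(y)] α = [ū; ȳ]` for a trajectory `(u, y)` with state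
sequence `x`, then the `α`-weighted combinations of the shifted states form a
state sequence certifying that `(ū, ȳ)` is a trajectory. -/
theorem hankel_comb_state (n m p L N : ℕ)
    (A : Matrix (Fin n) (Fin n) ℝ) (B : Matrix (Fin n) (Fin m) ℝ)
    (C : Matrix (Fin p) (Fin n) ℝ) (D : Matrix (Fin p) (Fin m) ℝ)
    (u ubar : ℕ → Fin m → ℝ) (y ybar : ℕ → Fin p → ℝ) (x : ℕ → Fin n → ℝ)
    (hLN : L ≤ N)
    (hx : ∀ k < N,
      x (k + 1) = A.mulVec (x k) + B.mulVec (u k) ∧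
      y k = C.mulVec (x k) + D.mulVec (u k))
    (α : Fin (N - L + 1) → ℝ)
    (hu : ∀ (k : Fin L) (s : Fin m),
      (hankel m L N u).mulVec α (k, s) = ubar (k : ℕ) s)
    (hy : ∀ (k : Fin L) (s : Fin p),
      (hankel p L N y).mulVec α (k, s) = ybar (k : ℕ) s) :
    ∀ k < L,
      (∑ j : Fin (N - L + 1), α j • x (k + 1 + (j : ℕ))) =
        A.mulVec (∑ j : Fin (N - L + 1), α j • x (k + (j : ℕ))) + B.mulVec (ubar k) ∧
      ybar k = C.mulVec (∑ j : Fin (N - L + 1), α j • x (k + (j : ℕ))) + D.mulVec (ubar k) := by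
  intro k hk
  have hN : ∀ j : Fin (N - L + 1), k + (j : ℕ) < N := by
    intro j
    have := j.isLt
    omega
  have hubar : ubar k = ∑ j : Fin (N - L + 1), α j • u (k + (j : ℕ)) := by
    funext s
    rw [← hu ⟨k, hk⟩ s]
    simp [hankel, Matrix.mulVec, dotProduct, Finset.sum_apply, mul_comm]
  have hybar : ybar k = ∑ j : Fin (N - L + 1), α j • y (k + (j : ℕ)) := by
    funext s
    rw [← hy ⟨k, hk⟩ s]
    simp [hankel, Matrix.mulVec, dotProduct, Finset.sum_apply, mul_comm]
  constructor
  · calc (∑ j : Fin (N - L + 1), α j • x (k + 1 + (j : ℕ)))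
        = ∑ j : Fin (N - L + 1),
            (α j • A.mulVec (x (k + (j : ℕ))) + α j • B.mulVec (u (k + (j : ℕ)))) := by
          refine Finset.sum_congr rfl fun j _ => ?_
          have h1 := (hx (k + (j : ℕ)) (hN j)).1
          rw [show k + 1 + (j : ℕ) = k + (j : ℕ) + 1 by ring, h1, smul_add]
      _ = A.mulVec (∑ j : Fin (N - L + 1), α j • x (k + (j : ℕ))) + B.mulVec (ubar k) := by
          rw [Finset.sum_add_distrib, mulVec_weighted, hubar, mulVec_weighted]
  · calc ybar k = ∑ j : Fin (N - L + 1), α j • y (k + (j : ℕ)) := hybar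
      _ = ∑ j : Fin (N - L + 1),
            (α j • C.mulVec (x (k + (j : ℕ))) + α j • D.mulVec (u (k + (j : ℕ)))) := by
          refine Finset.sum_congr rfl fun j _ => ?_
          rw [(hx (k + (j : ℕ)) (hN j)).2, smul_add]
      _ = C.mulVec (∑ j : Fin (N - L + 1), α j • x (k + (j : ℕ))) + D.mulVec (ubar k) := by
          rw [Finset.sum_add_distrib, mulVec_weighted, hubar, mulVec_weighted]
end

section
/- (Trajectory concatenation / weaving) Let (u¹,y¹) and (u²,y²) be trajectories of length L of an observable LTI system with state dimension n, with L ≥ n + 1. Suppose they overlap on a window of length n: u¹_{L-n+j} = u²_j and y¹_{L-n+j} = y²_j for j = 0,...,n-1. Then the weaved sequence of length 2L - n obtained by following (u¹,y¹) with the last L-n elements of (u²,y²) is again a trajectory of the system. -/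
open Matrix

def IsTraj {n m p : ℕ} (A : Matrix (Fin n) (Fin n) ℝ) (B : Matrix (Fin n) (Fin m) ℝ)
    (C : Matrix (Fin p) (Fin n) ℝ) (D : Matrix (Fin p) (Fin m) ℝ) (L : ℕ)
    (u : ℕ → Fin m → ℝ) (y : ℕ → Fin p → ℝ) : Prop :=
  ∃ x : ℕ → Fin n → ℝ, ∀ k < L,
    x (k + 1) = A.mulVec (x k) + B.mulVec (u k) ∧
    y k = C.mulVec (x k) + D.mulVec (u k)

def obsMat {n p : ℕ} (A : Matrix (Fin n) (Fin n) ℝ) (C : Matrix (Fin p) (Fin n) ℝ) :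
    Matrix (Fin n × Fin p) (Fin n) ℝ :=
  fun q j => (C * A ^ (q.1 : ℕ)) q.2 j

lemma rank_inj {n p : ℕ} (M : Matrix (Fin n × Fin p) (Fin n) ℝ) (h : M.rank = n)
    (v : Fin n → ℝ) (hv : M.mulVec v = 0) : v = 0 := by
  have h1 := LinearMap.finrank_range_add_finrank_ker M.mulVecLin
  have h2 : Module.finrank ℝ (LinearMap.range M.mulVecLin) = n := h
  rw [h2, Module.finrank_pi] at h1
  have hk : Module.finrank ℝ (LinearMap.ker M.mulVecLin) = 0 := by simpa using h1
  have hker : LinearMap.ker M.mulVecLin = ⊥ := Submodule.finrank_eq_zero.mp hk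
  have hmem : v ∈ LinearMap.ker M.mulVecLin := by
    simpa [LinearMap.mem_ker, Matrix.mulVecLin_apply] using hv
  rw [hker] at hmem
  simpa using hmem

/-- Weaving two length-`L` trajectories of an observable system that overlap on
a window of length `n` yields a trajectory of length `2L - n`. -/
theorem weave_two_trajectories (n m p L : ℕ)
    (A : Matrix (Fin n) (Fin n) ℝ) (B : Matrix (Fin n) (Fin m) ℝ)
    (C : Matrix (Fin p) (Fin n) ℝ) (D : Matrix (Fin p) (Fin m) ℝ)
    (hobs : (obsMat A C).rank = n) (hL : n + 1 ≤ L)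
    (u1 u2 : ℕ → Fin m → ℝ) (y1 y2 : ℕ → Fin p → ℝ)
    (h1 : IsTraj A B C D L u1 y1) (h2 : IsTraj A B C D L u2 y2)
    (hoverlap : ∀ j < n, u1 (L - n + j) = u2 j ∧ y1 (L - n + j) = y2 j) :
    IsTraj A B C D (2 * L - n)
      (fun k => if k < L then u1 k else u2 (k - (L - n)))
      (fun k => if k < L then y1 k else y2 (k - (L - n))) := by
  obtain ⟨x1, hx1⟩ := h1
  obtain ⟨x2, hx2⟩ := h2
  set δ : ℕ → Fin n → ℝ := fun j => x1 (L - n + j) - x2 j with hδ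
  -- state recursion for δ on the overlap window
  have hstep : ∀ j < n, δ (j + 1) = A.mulVec (δ j) := by
    intro j hj
    have hlt : L - n + j < L := by omega
    have e1 := (hx1 _ hlt).1
    have e2 := (hx2 j (by omega)).1
    have hu := (hoverlap j hj).1
    have : L - n + (j + 1) = (L - n + j) + 1 := by omega
    simp only [hδ, this, e1, e2, hu, Matrix.mulVec_sub]
    abel
  have hCδ : ∀ j < n, C.mulVec (δ j) = 0 := by
    intro j hj
    have hlt : L - n + j < L := by omega
    have e1 := (hx1 _ hlt).2
    have e2 := (hx2 j (by omega)).2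
    have hu := (hoverlap j hj).1
    have hy := (hoverlap j hj).2
    have : C.mulVec (x1 (L - n + j)) = C.mulVec (x2 j) := by
      have := e1.symm.trans (hy.trans e2)
      rw [hu] at this
      exact add_right_cancel this
    simp [hδ, Matrix.mulVec_sub, this]
  have hpow : ∀ j ≤ n, δ j = (A ^ j).mulVec (δ 0) := by
    intro j hj
    induction j with
    | zero => simp
    | succ j ih =>
      rw [hstep j (by omega), ih (by omega), Matrix.mulVec_mulVec, ← pow_succ']
  have hδ0 : δ 0 = 0 := by
    apply rank_inj _ hobs
    ext ⟨i, q⟩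
    have : ((obsMat A C).mulVec (δ 0)) (i, q) = ((C * A ^ (i : ℕ)).mulVec (δ 0)) q := rfl
    rw [this, ← Matrix.mulVec_mulVec, ← hpow i (le_of_lt i.isLt)]
    have := congrFun (hCδ i i.isLt) q
    simpa using this
  have hδall : ∀ j ≤ n, x1 (L - n + j) = x2 j := by
    intro j hj
    have h0 : δ j = 0 := by rw [hpow j hj, hδ0, Matrix.mulVec_zero]
    funext q
    simpa [hδ, sub_eq_zero] using congrFun h0 q
  -- the weaved state
  refine ⟨fun k => if k < L - n then x1 k else x2 (k - (L - n)), ?_⟩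
  intro k hk
  have hx1eq : ∀ k ≤ L, (if k < L - n then x1 k else x2 (k - (L - n))) = x1 k := by
    intro k hk
    by_cases h : k < L - n
    · simp [h]
    · have hj : k - (L - n) ≤ n := by omega
      have := hδall (k - (L - n)) hj
      have harith : L - n + (k - (L - n)) = k := by omega
      rw [harith] at this
      simp [h, this]
  by_cases hkL : k < L
  · simp only [hkL, if_pos, if_true]
    rw [hx1eq k (by omega), hx1eq (k + 1) (by omega)]
    exact hx1 k hkL
  · have hk1 : ¬ (k < L - n) := by omega
    have hk2 : ¬ (k + 1 < L - n) := by omega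
    simp only [hkL, if_neg, hk1, hk2, if_false]
    have harith : k + 1 - (L - n) = (k - (L - n)) + 1 := by omega
    rw [harith]
    exact hx2 (k - (L - n)) (by omega)
end

section
/- For a controllable and observable LTI system (A,B,C,D) with state dimension n, the trajectory space of length L ≥ n has dimension exactly mL + n. -/
open Matrix

/-- `(u, y)` (finitely indexed) is an input-output trajectory of length `L`
of the LTI system `(A, B, C, D)`. -/
def IsTrajF {n m p L : ℕ} (A : Matrix (Fin n) (Fin n) ℝ) (B : Matrix (Fin n) (Fin m) ℝ)
    (C : Matrix (Fin p) (Fin n) ℝ) (D : Matrix (Fin p) (Fin m) ℝ)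
    (u : Fin L → Fin m → ℝ) (y : Fin L → Fin p → ℝ) : Prop :=
  ∃ x : Fin (L + 1) → Fin n → ℝ, ∀ k : Fin L,
    x k.succ = A.mulVec (x k.castSucc) + B.mulVec (u k) ∧
    y k = C.mulVec (x k.castSucc) + D.mulVec (u k)

/-- Controllability matrix `[B AB ... A^(n-1)B]`. -/
def ctrbMat {n m : ℕ} (A : Matrix (Fin n) (Fin n) ℝ) (B : Matrix (Fin n) (Fin m) ℝ) :
    Matrix (Fin n) (Fin n × Fin m) ℝ :=
  fun i q => (A ^ (q.1 : ℕ) * B) i q.2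


section Aux

variable {n m p L : ℕ} (A : Matrix (Fin n) (Fin n) ℝ) (B : Matrix (Fin n) (Fin m) ℝ)

/-- State evolution over ℕ. -/
def stF (x0 : Fin n → ℝ) (u : ℕ → Fin m → ℝ) : ℕ → Fin n → ℝ
  | 0 => x0
  | k + 1 => A.mulVec (stF x0 u k) + B.mulVec (u k)

lemma stF_add (x0 x0' : Fin n → ℝ) (u u' : ℕ → Fin m → ℝ) (k : ℕ) :
    stF A B (x0 + x0') (u + u') k = stF A B x0 u k + stF A B x0' u' k := by
  induction k with
  | zero => rfl
  | succ k ih =>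
      simp [stF, ih, Matrix.mulVec_add, Pi.add_apply]
      abel

lemma stF_smul (c : ℝ) (x0 : Fin n → ℝ) (u : ℕ → Fin m → ℝ) (k : ℕ) :
    stF A B (c • x0) (c • u) k = c • stF A B x0 u k := by
  induction k with
  | zero => rfl
  | succ k ih =>
      simp [stF, ih, Matrix.mulVec_smul, Pi.smul_apply]

lemma stF_zero_input (x0 : Fin n → ℝ) (k : ℕ) :
    stF A B x0 0 k = (A ^ k).mulVec x0 := by
  induction k with
  | zero => simp [stF]
  | succ k ih =>
      simp [stF, ih, pow_succ']


/-- extend a finite input to ℕ -/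
def extU (u : Fin L → Fin m → ℝ) : ℕ → Fin m → ℝ :=
  fun j => if h : j < L then u ⟨j, h⟩ else 0

lemma extU_add (u u' : Fin L → Fin m → ℝ) :
    extU (u + u') = extU u + extU u' := by
  funext j; by_cases h : j < L <;> simp [extU, h]

lemma extU_smul (c : ℝ) (u : Fin L → Fin m → ℝ) :
    extU (c • u) = c • extU u := by
  funext j; by_cases h : j < L <;> simp [extU, h]

end Aux

/-- The trajectory map. -/
noncomputable def trajMap {n m p L : ℕ} (A : Matrix (Fin n) (Fin n) ℝ)
    (B : Matrix (Fin n) (Fin m) ℝ) (C : Matrix (Fin p) (Fin n) ℝ)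
    (D : Matrix (Fin p) (Fin m) ℝ) :
    ((Fin n → ℝ) × (Fin L → Fin m → ℝ)) →ₗ[ℝ]
      ((Fin L → Fin m → ℝ) × (Fin L → Fin p → ℝ)) where
  toFun w := (w.2, fun k => C.mulVec (stF A B w.1 (extU w.2) k) + D.mulVec (w.2 k))
  map_add' w w' := by
    ext k i
    · simp
    · simp [extU_add, stF_add, Matrix.mulVec_add]
      ring
  map_smul' c w := by
    ext k i
    · simp
    · simp [extU_smul, stF_smul, Matrix.mulVec_smul]
      ring

lemma trajMap_injective {n m p L : ℕ} (A : Matrix (Fin n) (Fin n) ℝ)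
    (B : Matrix (Fin n) (Fin m) ℝ) (C : Matrix (Fin p) (Fin n) ℝ)
    (D : Matrix (Fin p) (Fin m) ℝ)
    (hobs : (Matrix.rank (fun (q : Fin n × Fin p) (j : Fin n) => (C * A ^ (q.1 : ℕ)) q.2 j)) = n)
    (hL : n ≤ L) :
    Function.Injective (trajMap A B C D (L := L)) := by
  rw [← LinearMap.ker_eq_bot]
  rw [Submodule.eq_bot_iff]
  rintro ⟨x0, u⟩ hw
  simp only [LinearMap.mem_ker, trajMap, LinearMap.coe_mk, AddHom.coe_mk, Prod.mk_eq_zero] at hw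
  obtain ⟨hu, hy⟩ := hw
  subst hu
  have hext : extU (0 : Fin L → Fin m → ℝ) = 0 := by
    funext j; by_cases h : j < L <;> simp [extU, h]
  rw [hext] at hy
  -- y k = C A^k x0 = 0 for k < L
  have hy' : ∀ k : ℕ, k < L → C.mulVec ((A ^ k).mulVec x0) = 0 := by
    intro k hk
    have := congrFun hy ⟨k, hk⟩
    simpa [stF_zero_input] using this
  -- use observability
  set M : Matrix (Fin n × Fin p) (Fin n) ℝ :=
    fun q j => (C * A ^ (q.1 : ℕ)) q.2 j with hM
  have hMx : M.mulVec x0 = 0 := by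
    funext q
    have hqL : (q.1 : ℕ) < L := lt_of_lt_of_le q.1.isLt hL
    have h1 := congrFun (hy' q.1 hqL) q.2
    have : M.mulVec x0 q = ((C * A ^ (q.1 : ℕ)).mulVec x0) q.2 := by
      simp [Matrix.mulVec, dotProduct, hM]
    rw [this, ← Matrix.mulVec_mulVec]
    simpa using h1
  have hx0 : x0 = 0 := by
    have hker : LinearMap.ker M.mulVecLin = ⊥ := by
      have h1 := LinearMap.finrank_range_add_finrank_ker M.mulVecLin
      rw [Matrix.rank] at hobs
      rw [hobs] at h1
      simp only [Module.finrank_fintype_fun_eq_card, Fintype.card_fin] at h1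
      have : Module.finrank ℝ (LinearMap.ker M.mulVecLin) = 0 := by omega
      exact Submodule.finrank_eq_zero.mp this
    have : x0 ∈ LinearMap.ker M.mulVecLin := by
      simpa [Matrix.mulVecLin] using hMx
    simpa [hker] using this
  simp [hx0, Prod.ext_iff]

/-- For a controllable and observable LTI system of order `n`, the trajectory
space of length `L ≥ n` has dimension exactly `m L + n`. -/
theorem trajectory_space_dim_eq (n m p L : ℕ)
    (A : Matrix (Fin n) (Fin n) ℝ) (B : Matrix (Fin n) (Fin m) ℝ)
    (C : Matrix (Fin p) (Fin n) ℝ) (D : Matrix (Fin p) (Fin m) ℝ)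
    (hctrb : (ctrbMat A B).rank = n) (hobs : (obsMat A C).rank = n)
    (hL : n ≤ L)
    (S : Submodule ℝ ((Fin L → Fin m → ℝ) × (Fin L → Fin p → ℝ)))
    (hS : ∀ w, w ∈ S ↔ IsTrajF A B C D w.1 w.2) :
    Module.finrank ℝ S = m * L + n := by
  have hrange : S = LinearMap.range (trajMap A B C D (L := L)) := by
    ext w
    rw [hS]
    constructor
    · rintro ⟨x, hx⟩
      refine ⟨(x 0, w.1), ?_⟩
      have key : ∀ k : ℕ, (hk : k ≤ L) → stF A B (x 0) (extU w.1) k = x ⟨k, by omega⟩ := by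
        intro k
        induction k with
        | zero => intro _; rfl
        | succ k ih =>
            intro hk
            have hkL : k < L := by omega
            have h1 := (hx ⟨k, hkL⟩).1
            have h2 : stF A B (x 0) (extU w.1) (k + 1)
                = A.mulVec (x ⟨k, by omega⟩) + B.mulVec (extU w.1 k) := by
              rw [stF, ih (by omega)]
            rw [h2]
            have hcast : (Fin.castSucc ⟨k, hkL⟩ : Fin (L+1)) = ⟨k, by omega⟩ := rfl
            have hsucc : (Fin.succ ⟨k, hkL⟩ : Fin (L+1)) = ⟨k+1, by omega⟩ := rfl
            rw [hcast, hsucc] at h1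
            rw [h1]
            congr 1
            simp [extU, hkL]
      have hy : w.2 = fun k : Fin L =>
          C.mulVec (stF A B (x 0) (extU w.1) k) + D.mulVec (w.1 k) := by
        funext k
        have h2 := (hx k).2
        rw [h2]
        have : stF A B (x 0) (extU w.1) (k : ℕ) = x k.castSucc := by
          rw [key k (le_of_lt k.isLt)]
          rfl
        rw [this]
      simp only [trajMap, LinearMap.coe_mk, AddHom.coe_mk]
      exact Prod.ext rfl hy.symm
    · rintro ⟨⟨x0, u⟩, hx⟩
      have hu : w.1 = u := by rw [← hx]; rfl
      have hy : w.2 = fun k : Fin L =>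
          C.mulVec (stF A B x0 (extU u) k) + D.mulVec (u k) := by rw [← hx]; rfl
      refine ⟨fun k : Fin (L+1) => stF A B x0 (extU u) (k : ℕ), fun k => ?_⟩
      constructor
      · simp only [Fin.val_succ, Fin.coe_castSucc, stF]
        rw [hu]
        congr 1
        simp [extU, k.isLt]
      · rw [hy, hu]
        simp only [Fin.coe_castSucc]
  rw [hrange]
  have hinj : Function.Injective (trajMap A B C D (L := L)) :=
    trajMap_injective A B C D (by exact hobs) hL
  rw [LinearMap.finrank_range_of_inj hinj]
  simp only [Module.finrank_prod, Module.finrank_fintype_fun_eq_card, Fintype.card_fin,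
    Module.finrank_pi_fintype]
  simp [Finset.sum_const, mul_comm]
  omega
end

section
/- (Superposition of trajectory predictions) Let (u,y) be a trajectory of an LTI system G, and suppose α, β ∈ ℝ^{N-L+1} both satisfy H_L(u)γ = ū and the first ν block rows of H_L(y)γ equal ȳ_{[0,ν-1]} (for γ = α and γ = β), where ν ≥ n and G is observable. Then H_L(y)α = H_L(y)β, i.e., the predicted output is unique. -/
open Matrix

/-- Superposition of trajectory predictions: two coefficient vectors matching
the same input `ū` and the same first `ν ≥ n` outputs `ȳ` yield the same
predicted output, for an observable system. -/
theorem predicted_output_unique (n m p L N ν : ℕ)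
    (A : Matrix (Fin n) (Fin n) ℝ) (B : Matrix (Fin n) (Fin m) ℝ)
    (C : Matrix (Fin p) (Fin n) ℝ) (D : Matrix (Fin p) (Fin m) ℝ)
    (hobs : (obsMat A C).rank = n)
    (hν : n ≤ ν) (hνL : ν ≤ L) (hLN : L ≤ N)
    (u ubar : ℕ → Fin m → ℝ) (y ybar : ℕ → Fin p → ℝ)
    (htraj : IsTraj A B C D N u y)
    (α β : Fin (N - L + 1) → ℝ)
    (hαu : ∀ k < L, (∑ j : Fin (N - L + 1), α j • u (k + (j : ℕ))) = ubar k)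
    (hβu : ∀ k < L, (∑ j : Fin (N - L + 1), β j • u (k + (j : ℕ))) = ubar k)
    (hαy : ∀ k < ν, (∑ j : Fin (N - L + 1), α j • y (k + (j : ℕ))) = ybar k)
    (hβy : ∀ k < ν, (∑ j : Fin (N - L + 1), β j • y (k + (j : ℕ))) = ybar k) :
    ∀ k < L, (∑ j : Fin (N - L + 1), α j • y (k + (j : ℕ))) =
      ∑ j : Fin (N - L + 1), β j • y (k + (j : ℕ)) := by
  obtain ⟨x, hx⟩ := htraj
  set δ : Fin (N - L + 1) → ℝ := fun j => α j - β j with hδ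
  have hδu : ∀ k < L, (∑ j : Fin (N - L + 1), δ j • u (k + (j : ℕ))) = 0 := by
    intro k hk
    have h1 := hαu k hk; have h2 := hβu k hk
    simp only [hδ, sub_smul, Finset.sum_sub_distrib, h1, h2, sub_self]
  have hδy : ∀ k < ν, (∑ j : Fin (N - L + 1), δ j • y (k + (j : ℕ))) = 0 := by
    intro k hk
    have h1 := hαy k hk; have h2 := hβy k hk
    simp only [hδ, sub_smul, Finset.sum_sub_distrib, h1, h2, sub_self]
  set z : ℕ → Fin n → ℝ := fun k => ∑ j : Fin (N - L + 1), δ j • x (k + (j : ℕ)) with hz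
  have hkN : ∀ (k : ℕ) (j : Fin (N - L + 1)), k < L → k + (j : ℕ) < N := by
    intro k j hk
    have : (j : ℕ) ≤ N - L := Nat.lt_succ_iff.mp j.2
    omega
  -- C z k + D (∑ δ u) is the output difference
  have hCz : ∀ k < L, (∑ j : Fin (N - L + 1), δ j • y (k + (j : ℕ)))
      = C.mulVec (z k) + D.mulVec (∑ j : Fin (N - L + 1), δ j • u (k + (j : ℕ))) := by
    intro k hk
    have : (∑ j : Fin (N - L + 1), δ j • y (k + (j : ℕ)))
        = ∑ j : Fin (N - L + 1), δ j • (C.mulVec (x (k + (j : ℕ))) + D.mulVec (u (k + (j : ℕ)))) := by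
      refine Finset.sum_congr rfl fun j _ => ?_
      rw [(hx (k + (j : ℕ)) (hkN k j hk)).2]
    rw [this]
    simp only [smul_add, Finset.sum_add_distrib]
    congr 1
    · rw [hz, ← C.mulVecLin_apply, map_sum]
      simp only [_root_.map_smul, Matrix.mulVecLin_apply]
    · rw [← D.mulVecLin_apply, map_sum]
      simp only [_root_.map_smul, Matrix.mulVecLin_apply]
  have hz_step : ∀ k < L, z (k + 1) = A.mulVec (z k) := by
    intro k hk
    have h1 : z (k + 1) = ∑ j : Fin (N - L + 1),
        δ j • (A.mulVec (x (k + (j : ℕ))) + B.mulVec (u (k + (j : ℕ)))) := by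
      rw [hz]
      refine Finset.sum_congr rfl fun j _ => ?_
      rw [show k + 1 + (j : ℕ) = k + (j : ℕ) + 1 by ring, (hx (k + (j : ℕ)) (hkN k j hk)).1]
    rw [h1]
    simp only [smul_add, Finset.sum_add_distrib]
    have h2 : (∑ j : Fin (N - L + 1), δ j • A.mulVec (x (k + (j : ℕ)))) = A.mulVec (z k) := by
      rw [hz, ← A.mulVecLin_apply, map_sum]
      simp only [_root_.map_smul, Matrix.mulVecLin_apply]
    have h3 : (∑ j : Fin (N - L + 1), δ j • B.mulVec (u (k + (j : ℕ)))) = 0 := by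
      have : (∑ j : Fin (N - L + 1), δ j • B.mulVec (u (k + (j : ℕ))))
          = B.mulVec (∑ j : Fin (N - L + 1), δ j • u (k + (j : ℕ))) := by
        rw [← B.mulVecLin_apply, map_sum]
        simp only [_root_.map_smul, Matrix.mulVecLin_apply]
      rw [this, hδu k hk, Matrix.mulVec_zero]
    rw [h2, h3, add_zero]
  have hz_pow : ∀ k ≤ L, z k = (A ^ k).mulVec (z 0) := by
    intro k
    induction k with
    | zero => intro _; simp
    | succ k ih =>
      intro hk
      rw [hz_step k (by omega), ih (by omega), Matrix.mulVec_mulVec, ← pow_succ']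
  have hCzero : ∀ k < ν, C.mulVec (z k) = 0 := by
    intro k hk
    have h1 := hCz k (lt_of_lt_of_le hk hνL)
    rw [hδy k hk, hδu k (lt_of_lt_of_le hk hνL), Matrix.mulVec_zero, add_zero] at h1
    exact h1.symm
  have hObsZero : (obsMat A C).mulVec (z 0) = 0 := by
    funext q
    have h1 : (obsMat A C).mulVec (z 0) q = ((C * A ^ (q.1 : ℕ)).mulVec (z 0)) q.2 := rfl
    rw [h1, ← Matrix.mulVec_mulVec, ← hz_pow (q.1 : ℕ) (le_trans (le_of_lt q.1.2) (le_trans hν hνL)),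
      hCzero (q.1 : ℕ) (lt_of_lt_of_le q.1.2 hν)]
    rfl
  have hz0 : z 0 = 0 := by
    have hker : LinearMap.ker (obsMat A C).mulVecLin = ⊥ := by
      have hrn : (obsMat A C).rank
          + Module.finrank ℝ (LinearMap.ker (obsMat A C).mulVecLin)
          = Module.finrank ℝ (Fin n → ℝ) :=
        LinearMap.finrank_range_add_finrank_ker _
      rw [hobs] at hrn
      have hfin : Module.finrank ℝ (Fin n → ℝ) = n := by simp
      have h0 : Module.finrank ℝ (LinearMap.ker (obsMat A C).mulVecLin) = 0 := by omega
      exact Submodule.finrank_eq_zero.mp h0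
    have : z 0 ∈ LinearMap.ker (obsMat A C).mulVecLin := by
      simp [LinearMap.mem_ker, Matrix.mulVecLin_apply, hObsZero]
    rw [hker] at this
    simpa using this
  intro k hk
  have hzk : z k = 0 := by
    rw [hz_pow k (le_of_lt hk), hz0, Matrix.mulVec_zero]
  have h1 := hCz k hk
  rw [hδu k hk, hzk, Matrix.mulVec_zero, Matrix.mulVec_zero, add_zero] at h1
  have : (∑ j : Fin (N - L + 1), α j • y (k + (j : ℕ)))
      - (∑ j : Fin (N - L + 1), β j • y (k + (j : ℕ))) = 0 := by
    rw [← Finset.sum_sub_distrib]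
    simpa only [hδ, sub_smul] using h1
  exact sub_eq_zero.mp this
end

section
/- (Data-driven simulation correctness) Suppose (u,y) is a length-N trajectory of an observable LTI system G of order n, (ū,ȳ) is a length-L trajectory of G, ν ≥ n, and α ∈ ℝ^{N-L+1} satisfies H_L(u)α = ū and H_ν(y_{[0,N-L+ν-1]})α = ȳ_{[0,ν-1]}. Then H_L(y)α = ȳ. -/
open Matrix

lemma mulVec_injective_of_rank {ι : Type*} [Fintype ι] {b : ℕ} (M : Matrix ι (Fin b) ℝ)
    (h : M.rank = b) : Function.Injective M.mulVec := by
  have h1 := LinearMap.finrank_range_add_finrank_ker M.mulVecLin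
  rw [Module.finrank_pi] at h1
  have hr : M.rank = Module.finrank ℝ (LinearMap.range M.mulVecLin) := rfl
  rw [← hr, h, Fintype.card_fin] at h1
  have hker : LinearMap.ker M.mulVecLin = ⊥ :=
    Submodule.finrank_eq_zero.1 (by omega)
  have := LinearMap.ker_eq_bot.mp hker
  exact this

/-- Data-driven simulation correctness: if `α` matches the input `ū` on all of
`[0, L)` and the output `ȳ` on the first `ν ≥ n` steps, then it reproduces the
whole output `ȳ` of the observable system. -/
theorem data_driven_simulation (n m p L N ν : ℕ)
    (A : Matrix (Fin n) (Fin n) ℝ) (B : Matrix (Fin n) (Fin m) ℝ)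
    (C : Matrix (Fin p) (Fin n) ℝ) (D : Matrix (Fin p) (Fin m) ℝ)
    (hobs : (obsMat A C).rank = n)
    (hν : n ≤ ν) (hνL : ν ≤ L) (hLN : L ≤ N)
    (u ubar : ℕ → Fin m → ℝ) (y ybar : ℕ → Fin p → ℝ)
    (htraj : IsTraj A B C D N u y)
    (htrajbar : IsTraj A B C D L ubar ybar)
    (α : Fin (N - L + 1) → ℝ)
    (hαu : ∀ k < L, (∑ j : Fin (N - L + 1), α j • u (k + (j : ℕ))) = ubar k)
    (hαy : ∀ k < ν, (∑ j : Fin (N - L + 1), α j • y (k + (j : ℕ))) = ybar k) :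
    ∀ k < L, (∑ j : Fin (N - L + 1), α j • y (k + (j : ℕ))) = ybar k := by
  obtain ⟨x, hx⟩ := htraj
  obtain ⟨xb, hxb⟩ := htrajbar
  set z : ℕ → Fin n → ℝ := fun k => ∑ j : Fin (N - L + 1), α j • x (k + (j : ℕ)) with hz
  have hkjN : ∀ k, k < L → ∀ j : Fin (N - L + 1), k + (j : ℕ) < N := by
    intro k hk j
    have := j.isLt
    omega
  -- state recursion for z
  have hstate : ∀ k < L, z (k + 1) = A.mulVec (z k) + B.mulVec (ubar k) := by
    intro k hk
    have h1 : z (k + 1) =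
        ∑ j : Fin (N - L + 1), α j • (A.mulVec (x (k + (j : ℕ))) + B.mulVec (u (k + (j : ℕ)))) := by
      rw [hz]
      refine Finset.sum_congr rfl fun j _ => ?_
      have hidx : k + 1 + (j : ℕ) = (k + (j : ℕ)) + 1 := by omega
      rw [hidx, (hx _ (hkjN k hk j)).1]
    rw [h1, ← hαu k hk, hz]
    simp only [smul_add, Finset.sum_add_distrib]
    congr 1
    · rw [← A.mulVecLin_apply, map_sum]
      simp [Matrix.mulVecLin_apply, Matrix.mulVec_smul]
    · rw [← B.mulVecLin_apply, map_sum]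
      simp [Matrix.mulVecLin_apply, Matrix.mulVec_smul]
  -- output formula for z
  have hout : ∀ k < L,
      (∑ j : Fin (N - L + 1), α j • y (k + (j : ℕ))) = C.mulVec (z k) + D.mulVec (ubar k) := by
    intro k hk
    have h1 : (∑ j : Fin (N - L + 1), α j • y (k + (j : ℕ))) =
        ∑ j : Fin (N - L + 1), α j • (C.mulVec (x (k + (j : ℕ))) + D.mulVec (u (k + (j : ℕ)))) := by
      refine Finset.sum_congr rfl fun j _ => ?_
      rw [(hx _ (hkjN k hk j)).2]
    rw [h1, ← hαu k hk, hz]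
    simp only [smul_add, Finset.sum_add_distrib]
    congr 1
    · rw [← C.mulVecLin_apply, map_sum]
      simp [Matrix.mulVecLin_apply, Matrix.mulVec_smul]
    · rw [← D.mulVecLin_apply, map_sum]
      simp [Matrix.mulVecLin_apply, Matrix.mulVec_smul]
  -- error state
  set e : ℕ → Fin n → ℝ := fun k => z k - xb k with he
  have herec : ∀ k < L, e (k + 1) = A.mulVec (e k) := by
    intro k hk
    rw [he]
    simp only
    rw [hstate k hk, (hxb k hk).1, Matrix.mulVec_sub]
    abel
  have hpow : ∀ k ≤ L, e k = (A ^ k).mulVec (e 0) := by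
    intro k
    induction k with
    | zero => intro _; simp
    | succ k ih =>
      intro hk
      rw [herec k (by omega), ih (by omega), Matrix.mulVec_mulVec, ← pow_succ']
  have hCe : ∀ k < ν, C.mulVec (e k) = 0 := by
    intro k hk
    have hkL : k < L := lt_of_lt_of_le hk hνL
    have h1 := hout k hkL
    rw [hαy k hk, (hxb k hkL).2] at h1
    have h2 : C.mulVec (xb k) = C.mulVec (z k) := by
      have := h1
      exact add_right_cancel this
    rw [he]
    simp only
    rw [Matrix.mulVec_sub, ← h2]
    simp
  have hobs0 : (obsMat A C).mulVec (e 0) = 0 := by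
    funext q
    have hq : (q.1 : ℕ) < ν := lt_of_lt_of_le q.1.isLt hν
    have h1 : ((obsMat A C).mulVec (e 0)) q = ((C * A ^ (q.1 : ℕ)).mulVec (e 0)) q.2 := by
      simp [Matrix.mulVec, dotProduct, obsMat]
    rw [h1, ← Matrix.mulVec_mulVec, ← hpow _ (by omega), hCe _ hq]
    rfl
  have he0 : e 0 = 0 := by
    have hinj := mulVec_injective_of_rank (obsMat A C) hobs
    apply hinj
    rw [hobs0, Matrix.mulVec_zero]
  have hzk : ∀ k ≤ L, z k = xb k := by
    intro k hk
    have := hpow k hk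
    rw [he0, Matrix.mulVec_zero, he] at this
    simpa [sub_eq_zero] using this
  intro k hk
  rw [hout k hk, hzk k (by omega), ← (hxb k hk).2]
end

section
/- (Weaving ξ trajectories) Let trajectories (ū^i, ȳ^i), i = 1,...,ξ, each of length L ≥ n+1, of an observable LTI system of order n satisfy the overlap conditions ū^i_{[L-n,L-1]} = ū^{i+1}_{[0,n-1]} and ȳ^i_{[L-n,L-1]} = ȳ^{i+1}_{[0,n-1]} for i = 1,...,ξ-1. Then the sequence of length L̃ = ξL + (1-ξ)n formed by (ū^1,ȳ^1) followed by the last L-n entries of each subsequent (ū^i,ȳ^i) is a trajectory of the same system. -/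
open Matrix

lemma obs_mulVec_eq_zero {n p : ℕ} (A : Matrix (Fin n) (Fin n) ℝ)
    (C : Matrix (Fin p) (Fin n) ℝ)
    (hobs : (obsMat A C).rank = n) {v : Fin n → ℝ}
    (hv : (obsMat A C).mulVec v = 0) : v = 0 := by
  have h1 := LinearMap.finrank_range_add_finrank_ker (obsMat A C).mulVecLin
  rw [Module.finrank_fin_fun] at h1
  have h2 : (obsMat A C).rank = Module.finrank ℝ (LinearMap.range (obsMat A C).mulVecLin) := rfl
  have h3 : Module.finrank ℝ (LinearMap.ker (obsMat A C).mulVecLin) = 0 := by omega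
  have h4 : LinearMap.ker (obsMat A C).mulVecLin = ⊥ := Submodule.finrank_eq_zero.mp h3
  have h5 : v ∈ LinearMap.ker (obsMat A C).mulVecLin := by
    simp [LinearMap.mem_ker, Matrix.mulVecLin_apply, hv]
  rw [h4] at h5
  simpa using h5

/-- Weaving `ξ` length-`L` trajectories of an observable system that overlap on
windows of length `n` yields a trajectory of length `ξ L + (1 - ξ) n`. -/
theorem weave_xi_trajectories (n m p L ξ : ℕ)
    (A : Matrix (Fin n) (Fin n) ℝ) (B : Matrix (Fin n) (Fin m) ℝ)
    (C : Matrix (Fin p) (Fin n) ℝ) (D : Matrix (Fin p) (Fin m) ℝ)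
    (hobs : (obsMat A C).rank = n) (hL : n + 1 ≤ L)
    (ubar : ℕ → ℕ → Fin m → ℝ) (ybar : ℕ → ℕ → Fin p → ℝ)
    (htraj : ∀ i < ξ, IsTraj A B C D L (ubar i) (ybar i))
    (hoverlap : ∀ i, i + 1 < ξ → ∀ j < n,
      ubar i (L - n + j) = ubar (i + 1) j ∧ ybar i (L - n + j) = ybar (i + 1) j)
    (U : ℕ → Fin m → ℝ) (Y : ℕ → Fin p → ℝ)
    (hU : ∀ i < ξ, ∀ k < L, U (i * (L - n) + k) = ubar i k)
    (hY : ∀ i < ξ, ∀ k < L, Y (i * (L - n) + k) = ybar i k) :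
    IsTraj A B C D (ξ * L - (ξ - 1) * n) U Y := by
  rcases Nat.eq_zero_or_pos ξ with hξ0 | hξpos
  · subst hξ0
    exact ⟨fun _ _ => 0, fun k hk => absurd hk (by omega)⟩
  obtain ⟨ξ', rfl⟩ : ∃ ξ', ξ = ξ' + 1 := ⟨ξ - 1, by omega⟩
  set a := L - n with ha_def
  have ha : 0 < a := by omega
  have hA : n + a = L := by omega
  -- choose certifying states
  have htraj' : ∀ i, ∃ xs : ℕ → Fin n → ℝ, i < ξ' + 1 → ∀ k, k < L →
      (xs (k + 1) = A.mulVec (xs k) + B.mulVec (ubar i k) ∧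
       ybar i k = C.mulVec (xs k) + D.mulVec (ubar i k)) := by
    intro i
    by_cases h : i < ξ' + 1
    · obtain ⟨xs, hxs⟩ := htraj i h
      exact ⟨xs, fun _ k hk => hxs k hk⟩
    · exact ⟨fun _ _ => 0, fun h' => absurd h' h⟩
  choose x hx using htraj'
  -- consistency of states on overlaps
  have hcons : ∀ i, i + 1 < ξ' + 1 → ∀ j, j ≤ n → x i (a + j) = x (i + 1) j := by
    intro i hi j hj
    have hiξ : i < ξ' + 1 := by omega
    have key : ∀ j, j < n → C.mulVec (x i (a + j) - x (i + 1) j) = 0 := by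
      intro j hjn
      have h1 := (hx i hiξ (a + j) (by omega)).2
      have h2 := (hx (i + 1) hi j (by omega)).2
      obtain ⟨hou, hoy⟩ := hoverlap i hi j hjn
      rw [Matrix.mulVec_sub]
      have h3 : C.mulVec (x i (a + j)) + D.mulVec (ubar (i + 1) j)
          = C.mulVec (x (i + 1) j) + D.mulVec (ubar (i + 1) j) := by
        rw [hou] at h1
        rw [← h1, hoy, h2]
      have h4 := add_right_cancel h3
      rw [h4, sub_self]
    have step : ∀ j, j < n →
        x i (a + j + 1) - x (i + 1) (j + 1) = A.mulVec (x i (a + j) - x (i + 1) j) := by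
      intro j hjn
      have h1 := (hx i hiξ (a + j) (by omega)).1
      have h2 := (hx (i + 1) hi j (by omega)).1
      obtain ⟨hou, _⟩ := hoverlap i hi j hjn
      rw [h1, h2, hou, Matrix.mulVec_sub]
      abel
    have dpow : ∀ j, j ≤ n →
        x i (a + j) - x (i + 1) j = (A ^ j).mulVec (x i a - x (i + 1) 0) := by
      intro j
      induction j with
      | zero => intro _; simp [Matrix.one_mulVec]
      | succ j ih =>
        intro hj
        have hjn : j < n := hj
        have : x i (a + j + 1) - x (i + 1) (j + 1)
            = (A ^ (j + 1)).mulVec (x i a - x (i + 1) 0) := by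
          rw [step j hjn, ih (Nat.le_of_lt hjn), Matrix.mulVec_mulVec, ← pow_succ']
        exact this
    have hobs0 : (obsMat A C).mulVec (x i a - x (i + 1) 0) = 0 := by
      funext qr
      obtain ⟨q, rr⟩ := qr
      have e1 : (obsMat A C).mulVec (x i a - x (i + 1) 0) (q, rr)
          = C.mulVec ((A ^ (q : ℕ)).mulVec (x i a - x (i + 1) 0)) rr := by
        rw [Matrix.mulVec_mulVec]
        rfl
      rw [e1, ← dpow (q : ℕ) (le_of_lt q.2), key (q : ℕ) q.2]
      rfl
    have hzero : x i a - x (i + 1) 0 = 0 := obs_mulVec_eq_zero A C hobs hobs0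
    have h := dpow j hj
    rw [hzero, Matrix.mulVec_zero] at h
    exact sub_eq_zero.mp h
  -- chaining consistency across several blocks
  have hchain : ∀ d i r r', i + d < ξ' + 1 → r ≤ L → r = r' + d * a →
      x i r = x (i + d) r' := by
    intro d
    induction d with
    | zero =>
      intro i r r' _ _ h
      have : r = r' := by simpa using h
      simp [this]
    | succ d ih =>
      intro i r r' hlt hr h
      have hsm : (d + 1) * a = d * a + a := by ring
      have h2 : r = (r' + d * a) + a := by rw [h, hsm]; ring
      have har : a ≤ r := h2 ▸ Nat.le_add_left a _
      have hsub : r - a = r' + d * a := by omega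
      have hstep1 : x i r = x (i + 1) (r - a) := by
        have hj1 : r - a ≤ n := by omega
        have hc := hcons i (by omega) (r - a) hj1
        rw [show a + (r - a) = r by omega] at hc
        exact hc
      rw [hstep1]
      have hih := ih (i + 1) (r - a) r' (by omega) (by omega) hsub
      rw [hih, show i + 1 + d = i + (d + 1) by omega]
  -- the woven state
  set q : ℕ → ℕ := fun t => min ξ' (t / a) with hq_def
  have hXval : ∀ i r, i ≤ ξ' → r ≤ L →
      x (q (i * a + r)) (i * a + r - q (i * a + r) * a) = x i r := by
    intro i r hi hr
    set t := i * a + r with ht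
    have hq1 : q t ≤ t / a := min_le_right _ _
    have hq2 : q t ≤ ξ' := min_le_left _ _
    have hit : i ≤ q t := by
      refine le_min hi ?_
      rw [Nat.le_div_iff_mul_le ha]
      exact Nat.le_add_right _ _
    have hqa : q t * a ≤ t :=
      le_trans (Nat.mul_le_mul_right a hq1) (Nat.div_mul_le_self t a)
    obtain ⟨d, hd⟩ : ∃ d, q t = i + d := ⟨q t - i, by omega⟩
    obtain ⟨P, hP⟩ : ∃ P, P = i * a := ⟨_, rfl⟩
    obtain ⟨Pd, hPd⟩ : ∃ Pd, Pd = d * a := ⟨_, rfl⟩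
    obtain ⟨Pq, hPq⟩ : ∃ Pq, Pq = q t * a := ⟨_, rfl⟩
    have h3 : Pq = P + Pd := by rw [hP, hPd, hPq, hd]; ring
    have heq : r = (t - q t * a) + d * a := by
      rw [← hPq, ← hPd]
      omega
    have := hchain d i r (t - q t * a) (by omega) hr heq
    rw [this, hd]
  refine ⟨fun t => x (q t) (t - q t * a), ?_⟩
  intro k hk
  have hT : (ξ' + 1) * L - (ξ' + 1 - 1) * n = (ξ' + 1) * a + n := by
    have e : (ξ' + 1) * L = ξ' * n + ((ξ' + 1) * a + n) := by rw [← hA]; ring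
    have e2 : (ξ' + 1 - 1) * n = ξ' * n := by simp
    rw [e, e2, Nat.add_sub_cancel_left]
  rw [hT] at hk
  set i := min ξ' (k / a) with hi_def
  have hile : i ≤ ξ' := min_le_left _ _
  have hidiv : i ≤ k / a := min_le_right _ _
  have hia : i * a ≤ k :=
    le_trans (Nat.mul_le_mul_right a hidiv) (Nat.div_mul_le_self k a)
  set r := k - i * a with hr_def
  have hkr : i * a + r = k := by omega
  have hrL : r < L := by
    rcases le_or_gt (k / a) ξ' with h | h
    · have hieq : i = k / a := min_eq_right h
      have hdm : a * (k / a) + k % a = k := Nat.div_add_mod k a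
      have hmod : k % a < a := Nat.mod_lt k ha
      have hcm : i * a = a * (k / a) := by rw [hieq]; ring
      omega
    · have hieq : i = ξ' := min_eq_left h.le
      obtain ⟨P1, hP1⟩ : ∃ P1, P1 = (ξ' + 1) * a := ⟨_, rfl⟩
      have h2 : P1 = i * a + a := by rw [hP1, hieq]; ring
      rw [← hP1] at hk
      omega
  have hUk : U k = ubar i r := by
    rw [← hkr]; exact hU i (by omega) r hrL
  have hYk : Y k = ybar i r := by
    rw [← hkr]; exact hY i (by omega) r hrL
  have hXk : x (q k) (k - q k * a) = x i r := by
    rw [← hkr]; exact hXval i r hile (le_of_lt hrL)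
  have hk1 : k + 1 = i * a + (r + 1) := by omega
  have hXk1 : x (q (k + 1)) (k + 1 - q (k + 1) * a) = x i (r + 1) := by
    rw [hk1]; exact hXval i (r + 1) hile hrL
  have hdyn := hx i (by omega) r hrL
  constructor
  · show x (q (k + 1)) (k + 1 - q (k + 1) * a)
      = A.mulVec (x (q k) (k - q k * a)) + B.mulVec (U k)
    rw [hXk1, hXk, hUk]
    exact hdyn.1
  · show Y k = C.mulVec (x (q k) (k - q k * a)) + D.mulVec (U k)
    rw [hXk, hUk, hYk]
    exact hdyn.2
end
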